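/- Let C = ⟨Tree, ⊴, Choice⟩ be a stit frame for Ag and let CS be a constant specification. Then every model M ∈ Mod_CS({C}) validates every formula A with ⊢_CS A if and only if C is a mixed successor frame. -/

import Mathlib

/-! Preliminaries: temporal frames, stit frames, jstit frames, the language of
JA-STIT, jstit models, satisfaction, and the Hilbert system Σ_D(CS). -/

/-- A temporal frame: a nonempty set of moments with a partial order satisfying
historical connection and no backward branching. -/
structure TemporalFrame (Mo : Type) : Type where
  le : Mo → Mo → Prop
  le_refl : ∀ m, le m m
  le_antisymm : ∀ {m m'}, le m m' → le m' m → m = m'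
  le_trans : ∀ {m1 m2 m3}, le m1 m2 → le m2 m3 → le m1 m3
  nonempty : Nonempty Mo
  hist_conn : ∀ m m1, ∃ m2, le m2 m ∧ le m2 m1
  no_backward : ∀ m m1 m2, le m1 m → le m2 m → le m1 m2 ∨ le m2 m1

namespace TemporalFrame

variable {Mo : Type} (T : TemporalFrame Mo)

/-- The strict companion of the temporal order. -/
def lt (m m' : Mo) : Prop := T.le m m' ∧ m ≠ m'

/-- A history is a maximal chain of moments w.r.t. the temporal order. -/
def IsHistory (h : Set Mo) : Prop :=
  IsChain T.le h ∧ ∀ h' : Set Mo, IsChain T.le h' → h ⊆ h' → h' = h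

/-- `T.H m` is the set of histories passing through the moment `m`. -/
def H (m : Mo) : Set (Set Mo) := { h | T.IsHistory h ∧ m ∈ h }

/-- Histories `h` and `g` are undivided at `m`. -/
def Undiv (m : Mo) (h g : Set Mo) : Prop := ∃ m', T.lt m m' ∧ m' ∈ h ∧ m' ∈ g

/-- `m'` is an immediate successor of `m`. -/
def Next (m m' : Mo) : Prop := T.lt m m' ∧ ∀ m'', T.lt m'' m' → T.le m'' m

/-- Mixed successor condition on (the temporal part of) a frame. -/
def MixSucc : Prop :=
  ∀ m m1 : Mo,
    (T.lt m m1 → ∃ m2, T.le m2 m1 ∧ T.Next m m2) ∨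
    (∀ h ∈ T.H m, ∀ g ∈ T.H m, T.Undiv m h g)

end TemporalFrame

/-- A stit frame for an agent community `Ag`: a temporal frame together with a choice
function assigning to each moment and agent a partition of the histories through that
moment, subject to no choice between undivided histories and independence of agents. -/
structure StitFrame (Mo : Type) (Ag : Type) extends TemporalFrame Mo where
  choice : Mo → Ag → Set (Set (Set Mo))
  choice_cell_nonempty : ∀ m j C, C ∈ choice m j → C.Nonempty
  choice_cell_sub : ∀ m j C, C ∈ choice m j → C ⊆ toTemporalFrame.H m
  choice_cover : ∀ m j h, h ∈ toTemporalFrame.H m → ∃ C ∈ choice m j, h ∈ C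
  choice_disjoint : ∀ m j C C', C ∈ choice m j → C' ∈ choice m j →
    (C ∩ C').Nonempty → C = C'
  no_choice_undiv : ∀ m j h h', h ∈ toTemporalFrame.H m → h' ∈ toTemporalFrame.H m →
    toTemporalFrame.Undiv m h h' → ∀ C ∈ choice m j, h ∈ C → h' ∈ C
  independence : ∀ m (f : Ag → Set (Set Mo)), (∀ j, f j ∈ choice m j) →
    (⋂ j, f j).Nonempty

/-- A justification stit (jstit) frame for `Ag`: a stit frame together with two
epistemic preorders `R ⊆ R_e`, with the temporal order included in `R`. -/
structure JstitFrame (Mo : Type) (Ag : Type) extends StitFrame Mo Ag where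
  R : Mo → Mo → Prop
  Re : Mo → Mo → Prop
  R_refl : ∀ m, R m m
  R_trans : ∀ {m1 m2 m3}, R m1 m2 → R m2 m3 → R m1 m3
  Re_refl : ∀ m, Re m m
  Re_trans : ∀ {m1 m2 m3}, Re m1 m2 → Re m2 m3 → Re m1 m3
  R_sub_Re : ∀ {m m'}, R m m' → Re m m'
  le_sub_R : ∀ {m m'}, le m m' → R m m'

namespace JstitFrame

variable {Mo : Type} {Ag : Type} (F : JstitFrame Mo Ag)

/-- The family `Θ_m` of subsets of the set of moments associated with a moment `m`. -/
def Theta (m : Mo) : Set (Set Mo) :=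
  { S | m ∈ S ∧
    (∀ m1 m2, m1 ∈ S → F.Re m1 m2 → m2 ∈ S) ∧
    (∀ m1, (∀ h ∈ F.toTemporalFrame.H m1,
        ∃ m2 ∈ h, F.toTemporalFrame.Next m1 m2 ∧ m2 ∈ S) → m1 ∈ S) ∧
    (∀ m1, m1 ∈ S →
      (∀ m2, F.toTemporalFrame.lt m2 m1 →
        ∃ m3, F.toTemporalFrame.lt m2 m3 ∧ F.toTemporalFrame.lt m3 m1) →
      ∃ m4, F.toTemporalFrame.lt m4 m1 ∧ m4 ∈ S) }

/-- A jstit frame is unirelational iff `R_e ⊆ R`. -/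
def Unirelational : Prop := ∀ m m', F.Re m m' → F.R m m'

/-- Regularity of a jstit frame. -/
def Regular : Prop :=
  ∀ m m1 : Mo, F.toTemporalFrame.lt m m1 →
    (∃ S : Set Mo,
      (∀ m0, F.toTemporalFrame.lt m m0 → F.le m0 m1 → S ∈ F.Theta m0) ∧
      m ∉ S ∧
      ∃ h' ∈ F.toTemporalFrame.H m,
        (∀ g ∈ F.toTemporalFrame.H m1, ¬ F.toTemporalFrame.Undiv m h' g) ∧
        (∀ m' ∈ h', F.toTemporalFrame.Next m m' → m' ∉ S)) →
    ∃ m2, F.le m2 m1 ∧ F.toTemporalFrame.Next m m2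

end JstitFrame

/-- Proof polynomials over proof variables `PVar` and proof constants `PConst`. -/
inductive Pol (PVar PConst : Type) : Type
  | var : PVar → Pol PVar PConst
  | const : PConst → Pol PVar PConst
  | plus : Pol PVar PConst → Pol PVar PConst → Pol PVar PConst
  | times : Pol PVar PConst → Pol PVar PConst → Pol PVar PConst
  | bang : Pol PVar PConst → Pol PVar PConst

/-- Formulas of JA-STIT. -/
inductive Form (Ag PVar PConst PropVar : Type) : Type
  | pv : PropVar → Form Ag PVar PConst PropVar
  | and : Form Ag PVar PConst PropVar → Form Ag PVar PConst PropVar →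
      Form Ag PVar PConst PropVar
  | neg : Form Ag PVar PConst PropVar → Form Ag PVar PConst PropVar
  | stit : Ag → Form Ag PVar PConst PropVar → Form Ag PVar PConst PropVar
  | box : Form Ag PVar PConst PropVar → Form Ag PVar PConst PropVar
  | proves : Pol PVar PConst → Form Ag PVar PConst PropVar → Form Ag PVar PConst PropVar
  | know : Form Ag PVar PConst PropVar → Form Ag PVar PConst PropVar
  | ann : Pol PVar PConst → Form Ag PVar PConst PropVar

namespace Form

variable {Ag PVar PConst PropVar : Type}

/-- Implication, defined as usual from `¬` and `∧`. -/
def imp (A B : Form Ag PVar PConst PropVar) : Form Ag PVar PConst PropVar :=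
  neg (and A (neg B))

/-- Disjunction, defined as usual. -/
def or (A B : Form Ag PVar PConst PropVar) : Form Ag PVar PConst PropVar :=
  neg (and (neg A) (neg B))

/-- The dual `◇` of the historical necessity modality. -/
def dia (A : Form Ag PVar PConst PropVar) : Form Ag PVar PConst PropVar :=
  neg (box (neg A))

/-- Falsum, defined as usual. -/
def bot [Inhabited PropVar] : Form Ag PVar PConst PropVar :=
  and (pv default) (neg (pv default))

end Form

/-- Conjunction of a nonempty list of formulas (head plus tail). -/
def andList {Ag PVar PConst PropVar : Type} :
    Form Ag PVar PConst PropVar → List (Form Ag PVar PConst PropVar) →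
      Form Ag PVar PConst PropVar
  | A, [] => A
  | A, B :: L => Form.and A (andList B L)

/-- Disjunction of a list of formulas. -/
def bigOr {Ag PVar PConst PropVar : Type} [Inhabited PropVar] :
    List (Form Ag PVar PConst PropVar) → Form Ag PVar PConst PropVar
  | [] => Form.bot
  | [A] => A
  | A :: B :: L => Form.or A (bigOr (B :: L))

/-- A classical propositional tautology: a formula true under every Boolean valuation
commuting with `∧` and `¬` (all other formulas being treated as atoms). -/
def Tautology {Ag PVar PConst PropVar : Type} (A : Form Ag PVar PConst PropVar) : Prop :=
  ∀ v : Form Ag PVar PConst PropVar → Bool,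
    (∀ B C, v (Form.and B C) = (v B && v C)) →
    (∀ B, v (Form.neg B) = !v B) →
    v A = true

/-- The axiom schemes (A0)–(A9) of Σ_D. -/
inductive Ax {Ag PVar PConst PropVar : Type} : Form Ag PVar PConst PropVar → Prop
  -- (A0) classical propositional tautologies
  | a0 {A} : Tautology A → Ax A
  -- (A1) S5 axioms for □
  | boxK {A B} : Ax (Form.imp (Form.box (Form.imp A B))
      (Form.imp (Form.box A) (Form.box B)))
  | boxT {A} : Ax (Form.imp (Form.box A) A)
  | box4 {A} : Ax (Form.imp (Form.box A) (Form.box (Form.box A)))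
  | box5 {A} : Ax (Form.imp (Form.neg (Form.box A)) (Form.box (Form.neg (Form.box A))))
  -- (A1) S5 axioms for each [j]
  | stitK {j : Ag} {A B} : Ax (Form.imp (Form.stit j (Form.imp A B))
      (Form.imp (Form.stit j A) (Form.stit j B)))
  | stitT {j : Ag} {A} : Ax (Form.imp (Form.stit j A) A)
  | stit4 {j : Ag} {A} : Ax (Form.imp (Form.stit j A) (Form.stit j (Form.stit j A)))
  | stit5 {j : Ag} {A} : Ax (Form.imp (Form.neg (Form.stit j A))
      (Form.stit j (Form.neg (Form.stit j A))))
  -- (A2)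
  | a2 {j : Ag} {A} : Ax (Form.imp (Form.box A) (Form.stit j A))
  -- (A3), for pairwise distinct agents
  | a3 {p : Ag × Form Ag PVar PConst PropVar} {L : List (Ag × Form Ag PVar PConst PropVar)} :
      (((p :: L).map Prod.fst).Nodup) →
      Ax (Form.imp
        (andList (Form.dia (Form.stit p.1 p.2)) (L.map fun q => Form.dia (Form.stit q.1 q.2)))
        (Form.dia (andList (Form.stit p.1 p.2) (L.map fun q => Form.stit q.1 q.2))))
  -- (A4)
  | a4 {s t : Pol PVar PConst} {A B} : Ax (Form.imp (Form.proves s (Form.imp A B))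
      (Form.imp (Form.proves t A) (Form.proves (Pol.times s t) B)))
  -- (A5)
  | a5 {t : Pol PVar PConst} {A} : Ax (Form.imp (Form.proves t A)
      (Form.and (Form.proves (Pol.bang t) (Form.proves t A)) (Form.know A)))
  -- (A6)
  | a6 {s t : Pol PVar PConst} {A} : Ax (Form.imp
      (Form.or (Form.proves s A) (Form.proves t A)) (Form.proves (Pol.plus s t) A))
  -- (A7) S4 axioms for K
  | knowK {A B} : Ax (Form.imp (Form.know (Form.imp A B))
      (Form.imp (Form.know A) (Form.know B)))
  | knowT {A} : Ax (Form.imp (Form.know A) A)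
  | know4 {A} : Ax (Form.imp (Form.know A) (Form.know (Form.know A)))
  -- (A8)
  | a8 {A} : Ax (Form.imp (Form.know A) (Form.box (Form.know (Form.box A))))
  -- (A9)
  | a9 {t : Pol PVar PConst} : Ax (Form.imp (Form.box (Form.ann t))
      (Form.know (Form.box (Form.ann t))))

/-- Iterated prefixes `c_n : … : c_1 : A` of instances `A` of the axiom schemes. -/
inductive ConstIter {Ag PVar PConst PropVar : Type} : Form Ag PVar PConst PropVar → Prop
  | base {c : PConst} {A} : Ax A → ConstIter (Form.proves (Pol.const c) A)
  | step {c : PConst} {B} : ConstIter B → ConstIter (Form.proves (Pol.const c) B)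

/-- A constant specification: a set of formulas of the form `c_n : … : c_1 : A` with `A`
an instance of (A0)–(A9), closed under deleting the outermost constant. -/
def IsConstSpec {Ag PVar PConst PropVar : Type}
    (CS : Set (Form Ag PVar PConst PropVar)) : Prop :=
  (∀ B ∈ CS, ConstIter B) ∧
  ∀ (c c' : PConst) (B : Form Ag PVar PConst PropVar),
    Form.proves (Pol.const c) (Form.proves (Pol.const c') B) ∈ CS →
    Form.proves (Pol.const c') B ∈ CS

/-- Provability in Σ_D(CS): axioms (A0)–(A9), modus ponens (R1), K-necessitation (R2),
the rule (R_D) and the rule (R_CS). -/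
inductive Proves {Ag PVar PConst PropVar : Type} [Inhabited PropVar]
    (CS : Set (Form Ag PVar PConst PropVar)) : Form Ag PVar PConst PropVar → Prop
  | ax {A} : Ax A → Proves CS A
  | mp {A B} : Proves CS (Form.imp A B) → Proves CS A → Proves CS B
  | nec {A} : Proves CS A → Proves CS (Form.know A)
  | rd {A : Form Ag PVar PConst PropVar} {ts ss : List (Pol PVar PConst)}
      (hne : ts ++ ss ≠ []) :
      Proves CS (Form.imp (Form.know A)
        (bigOr ((ts.map fun t => Form.neg (Form.box (Form.ann t))) ++
                (ss.map fun s => Form.box (Form.ann s))))) →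
      Proves CS (Form.imp (Form.know A)
        (bigOr ((ts.map fun t => Form.neg (Form.ann t)) ++
                (ss.map fun s => Form.ann s))))
  | rcs {B} : B ∈ CS → Proves CS B

/-- Γ is consistent in Σ_D(CS): no finite nonempty conjunction of members of Γ provably
implies falsum. -/
def CSConsistent {Ag PVar PConst PropVar : Type} [Inhabited PropVar]
    (CS Γ : Set (Form Ag PVar PConst PropVar)) : Prop :=
  ¬ ∃ (A : Form Ag PVar PConst PropVar) (L : List (Form Ag PVar PConst PropVar)),
      A ∈ Γ ∧ (∀ B ∈ L, B ∈ Γ) ∧ Proves CS (Form.imp (andList A L) Form.bot)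

/-- A jstit model for `Ag`: a jstit frame together with `Act`, an admissible evidence
function `E` and an evaluation `V`, subject to the semantical constraints. -/
structure JstitModel (Mo : Type) (Ag PVar PConst PropVar : Type)
    extends JstitFrame Mo Ag where
  act : Mo → Set Mo → Set (Pol PVar PConst)
  ev : Mo → Pol PVar PConst → Set (Form Ag PVar PConst PropVar)
  val : PropVar → Set (Mo × Set Mo)
  -- monotonicity of evidence
  ev_mono : ∀ m m' t, Re m m' → ev m t ⊆ ev m' t
  -- evidence closure properties
  ev_app : ∀ m s t A B, Form.imp A B ∈ ev m s → A ∈ ev m t → B ∈ ev m (Pol.times s t)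
  ev_sum_left : ∀ m s t, ev m s ⊆ ev m (Pol.plus s t)
  ev_sum_right : ∀ m s t, ev m t ⊆ ev m (Pol.plus s t)
  ev_bang : ∀ m t A, A ∈ ev m t → Form.proves t A ∈ ev m (Pol.bang t)
  -- expansion of presented proofs
  expansion : ∀ m m' h, toTemporalFrame.lt m' m → h ∈ toTemporalFrame.H m →
    act m' h ⊆ act m h
  -- no new proofs guaranteed
  no_new : ∀ m t, (∀ h ∈ toTemporalFrame.H m, t ∈ act m h) →
    ∃ m' h, toTemporalFrame.lt m' m ∧ h ∈ toTemporalFrame.H m ∧ t ∈ act m' h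
  -- presenting a new proof makes histories divide
  divide : ∀ m h h', h ∈ toTemporalFrame.H m → h' ∈ toTemporalFrame.H m →
    toTemporalFrame.Undiv m h h' → act m h = act m h'
  -- presented proofs are epistemically transparent
  transparent : ∀ m m' t, Re m m' → (∀ h ∈ toTemporalFrame.H m, t ∈ act m h) →
    ∀ h' ∈ toTemporalFrame.H m', t ∈ act m' h'

namespace JstitModel

variable {Mo Ag PVar PConst PropVar : Type}

/-- `Act_m`, the set of proofs presented at `m` under every history through `m`. -/
def ActM (M : JstitModel Mo Ag PVar PConst PropVar) (m : Mo) : Set (Pol PVar PConst) :=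
  { t | ∀ h ∈ M.toTemporalFrame.H m, t ∈ M.act m h }

/-- The satisfaction relation for jstit models. -/
def Sat (M : JstitModel Mo Ag PVar PConst PropVar) :
    Form Ag PVar PConst PropVar → Mo → Set Mo → Prop
  | Form.pv p, m, h => (m, h) ∈ M.val p
  | Form.and A B, m, h => M.Sat A m h ∧ M.Sat B m h
  | Form.neg A, m, h => ¬ M.Sat A m h
  | Form.stit j A, m, h => ∀ h' C, C ∈ M.choice m j → h ∈ C → h' ∈ C → M.Sat A m h'
  | Form.box A, m, _ => ∀ h' ∈ M.toTemporalFrame.H m, M.Sat A m h'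
  | Form.know A, m, _ => ∀ m' h', M.R m m' → h' ∈ M.toTemporalFrame.H m' → M.Sat A m' h'
  | Form.proves t A, m, _ => A ∈ M.ev m t ∧
      ∀ m' h', M.Re m m' → h' ∈ M.toTemporalFrame.H m' → M.Sat A m' h'
  | Form.ann t, m, h => t ∈ M.act m h

/-- Validity of a formula in a jstit model. -/
def Valid (M : JstitModel Mo Ag PVar PConst PropVar)
    (A : Form Ag PVar PConst PropVar) : Prop :=
  ∀ m h, h ∈ M.toTemporalFrame.H m → M.Sat A m h

end JstitModel

/-- CS-normality of a jstit model. -/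
def CSNormal {Mo Ag PVar PConst PropVar : Type}
    (CS : Set (Form Ag PVar PConst PropVar))
    (M : JstitModel Mo Ag PVar PConst PropVar) : Prop :=
  ∀ (c : PConst) (m : Mo) (A : Form Ag PVar PConst PropVar),
    Form.proves (Pol.const c) A ∈ CS → A ∈ M.ev m (Pol.const c)

/-!
All axioms and the rules other than (R_D) are sound in every CS-normal jstit model.
Soundness of (R_D) over mixed successor frames: for every moment-history pair `(m, h)` there
is a moment `n ⊵ m` on `h` with `Act_n = Act(m, h)`. If all histories through `m` are undivided
(or `m` is maximal) take `n = m`; otherwise take the immediate successor of `m` on `h`, where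
"presenting a new proof makes histories divide", expansion and "no new proofs guaranteed" pin
`Act_n` down to `Act(m, h)`. As `K A` persists from `m` to `n`, the premise of (R_D) at `(n, h)`
gives its conclusion at `(m, h)`.

Conversely, let `m ⊲ m1` have no immediate successor below `m1` while some histories through
`m` are divided at `m`, and let `D` be the histories undivided at `m` from one through `m1`.
Presenting `t` along `D` from `m` on and `s` along `D` strictly after `m` satisfies all the
constraints on `Act`: a proof `s` presented at `n ⊳ m` was already presented at some moment
strictly between `m` and `n`, as nothing in `D` is an immediate successor of `m`. At `m` this model
satisfies `K(□Et → □Es)` and `Et ∧ ¬Es`, refuting the (R_D)-consequence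
`K(□Et → □Es) → (¬Et ∨ Es)` of the theorem `K(□Et → □Es) → (¬□Et ∨ □Es)`.
-/

namespace TemporalFrame

variable {Mo : Type} {T : TemporalFrame Mo} {m m1 n p : Mo} {h k g : Set Mo}

lemma lt_of_lt_of_le (hmn : T.lt m n) (hnp : T.le n p) : T.lt m p :=
  ⟨T.le_trans hmn.1 hnp, by rintro rfl; exact hmn.2 (T.le_antisymm hmn.1 hnp)⟩

lemma lt_of_le_of_lt (hmn : T.le m n) (hnp : T.lt n p) : T.lt m p :=
  ⟨T.le_trans hmn hnp.1, by rintro rfl; exact hnp.2 (T.le_antisymm hnp.1 hmn)⟩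

lemma IsHistory.mem_of_isChain_insert (hh : T.IsHistory h) (hc : IsChain T.le (insert n h)) :
    n ∈ h :=
  hh.2 _ hc (Set.subset_insert n h) ▸ Set.mem_insert n h

lemma IsHistory.mem_of_le (hh : T.IsHistory h) (hnm : T.le n m) (hm : m ∈ h) : n ∈ h := by
  refine hh.mem_of_isChain_insert (hh.1.insert fun b hb _ => ?_)
  by_cases hbm : b = m
  · exact Or.inl (hbm ▸ hnm)
  · rcases hh.1 hb hm hbm with hbm | hmb
    · exact (T.no_backward m b n hbm hnm).symm
    · exact Or.inl (T.le_trans hnm hmb)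

lemma exists_mem_H (m : Mo) : ∃ h, h ∈ T.H m := by
  obtain ⟨h, hmax, hm⟩ := (IsChain.singleton (r := T.le) (a := m)).exists_maxChain
  exact ⟨h, ⟨hmax.1, fun h' hc hsub => (hmax.2 hc hsub).symm⟩, hm rfl⟩

lemma H_anti (hmn : T.le m n) : T.H n ⊆ T.H m :=
  fun _ hh => ⟨hh.1, hh.1.mem_of_le hmn hh.2⟩

lemma exists_lt_mem_of_lt (hmn : T.lt m n) (hh : h ∈ T.H m) : ∃ p ∈ h, T.lt m p := by
  by_contra! hnone
  refine hnone n (hh.1.mem_of_isChain_insert (hh.1.1.insert fun b hb _ => ?_)) hmn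
  by_cases hbm : b = m
  · exact Or.inr (hbm ▸ hmn.1)
  · rcases hh.1.1 hb hh.2 hbm with hbm' | hmb
    · exact Or.inr (T.le_trans hbm' hmn.1)
    · exact absurd ⟨hmb, Ne.symm hbm⟩ (hnone b hb)

lemma eq_setOf_le_of_forall_not_lt (hmax : ∀ n, ¬ T.lt m n) (hh : h ∈ T.H m) :
    h = {n | T.le n m} := by
  refine (hh.1.2 _ (fun a ha b hb _ => T.no_backward m a b ha hb) fun n hn => ?_).symm
  by_cases hnm : n = m
  · exact hnm ▸ T.le_refl m
  · exact (hh.1.1 hn hh.2 hnm).resolve_right fun hmn => hmax n ⟨hmn, Ne.symm hnm⟩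

lemma subsingleton_H_of_forall_not_lt (hmax : ∀ n, ¬ T.lt m n) : (T.H m).Subsingleton :=
  fun _ hh _ hk => (eq_setOf_le_of_forall_not_lt hmax hh).trans
    (eq_setOf_le_of_forall_not_lt hmax hk).symm

lemma Undiv.symm (hu : T.Undiv m h k) : T.Undiv m k h :=
  let ⟨p, hmp, hph, hpk⟩ := hu
  ⟨p, hmp, hpk, hph⟩

lemma Undiv.trans (hhk : T.Undiv m h k) (hkg : T.Undiv m k g) (hh : T.IsHistory h)
    (hk : T.IsHistory k) (hg : T.IsHistory g) : T.Undiv m h g := by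
  obtain ⟨p, hmp, hph, hpk⟩ := hhk
  obtain ⟨q, hmq, hqk, hqg⟩ := hkg
  by_cases hpq : p = q
  · exact ⟨p, hmp, hph, hpq ▸ hqg⟩
  · rcases hk.1 hpk hqk hpq with hle | hle
    · exact ⟨p, hmp, hph, hg.mem_of_le hle hqg⟩
    · exact ⟨q, hmq, hh.mem_of_le hle hph, hqg⟩

lemma Undiv.mono (hu : T.Undiv n h k) (hmn : T.le m n) : T.Undiv m h k :=
  let ⟨p, hnp, hph, hpk⟩ := hu
  ⟨p, lt_of_le_of_lt hmn hnp, hph, hpk⟩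

lemma exists_not_undiv (hdiv : ∃ h0 ∈ T.H m, ∃ g0 ∈ T.H m, ¬ T.Undiv m h0 g0)
    (hh : T.IsHistory h) : ∃ g ∈ T.H m, ¬ T.Undiv m h g := by
  obtain ⟨h0, hh0, g0, hg0, hdiv⟩ := hdiv
  by_contra! hall
  exact hdiv (((hall h0 hh0).symm.trans (hall g0 hg0)) hh0.1 hh hg0.1)

lemma next_of_forall_not_between (hmn : T.lt m n) (hno : ∀ p, T.lt m p → ¬ T.lt p n) :
    T.Next m n := by
  refine ⟨hmn, fun p hpn => ?_⟩
  rcases T.no_backward n p m hpn.1 hmn.1 with hpm | hmp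
  · exact hpm
  · by_cases hpm : m = p
    · exact hpm ▸ T.le_refl m
    · exact absurd hpn (hno p ⟨hmp, hpm⟩)

lemma exists_between_of_undiv (hm1 : T.lt m m1) (hnext : ∀ n, T.le n m1 → ¬ T.Next m n)
    (hh : h ∈ T.H m1) (hmn : T.lt m n) (hk : k ∈ T.H n) (hu : T.Undiv m h k) :
    ∃ p, T.lt m p ∧ T.lt p n := by
  by_contra! hno
  have hN : T.Next m n := next_of_forall_not_between hmn hno
  obtain ⟨p, hmp, hph, hpk⟩ := hu
  have hnh : n ∈ h := by
    by_cases hpn : p = n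
    · exact hpn ▸ hph
    · rcases hk.1.1 hpk hk.2 hpn with hpn' | hnp
      · exact absurd ⟨hpn', hpn⟩ (hno p hmp)
      · exact hh.1.mem_of_le hnp hph
  by_cases hnm1 : n = m1
  · exact hnext n (hnm1 ▸ T.le_refl m1) hN
  · rcases hh.1.1 hnh hh.2 hnm1 with hnm1' | hm1n
    · exact hnext n hnm1' hN
    · exact hno m1 hm1 ⟨hm1n, Ne.symm hnm1⟩

end TemporalFrame

namespace JstitModel

open TemporalFrame

variable {Mo Ag PVar PConst PropVar : Type} {M : JstitModel Mo Ag PVar PConst PropVar}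
  {A B : Form Ag PVar PConst PropVar} {m n : Mo} {h : Set Mo} {j : Ag}

lemma sat_imp : M.Sat (A.imp B) m h ↔ (M.Sat A m h → M.Sat B m h) := by
  simp only [Form.imp, Sat]
  tauto

lemma sat_or : M.Sat (A.or B) m h ↔ (M.Sat A m h ∨ M.Sat B m h) := by
  simp only [Form.or, Sat]
  tauto

lemma sat_dia : M.Sat A.dia m h ↔ ∃ h' ∈ M.toTemporalFrame.H m, M.Sat A m h' := by
  simp only [Form.dia, Sat]
  push Not
  rfl

lemma not_sat_bot [Inhabited PropVar] :
    ¬ M.Sat (Form.bot : Form Ag PVar PConst PropVar) m h := by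
  simp only [Form.bot, Sat]
  tauto

lemma sat_andList {L : List (Form Ag PVar PConst PropVar)} :
    M.Sat (andList A L) m h ↔ M.Sat A m h ∧ ∀ B ∈ L, M.Sat B m h := by
  induction L generalizing A with
  | nil => simp [andList]
  | cons B L ih => simp only [andList, Sat, ih, List.forall_mem_cons]

lemma sat_bigOr [Inhabited PropVar] {L : List (Form Ag PVar PConst PropVar)} :
    M.Sat (bigOr L) m h ↔ ∃ B ∈ L, M.Sat B m h := by
  induction L with
  | nil => simp [bigOr, not_sat_bot]
  | cons A L ih =>
    cases L with
    | nil => simp [bigOr]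
    | cons B L => simp only [bigOr, sat_or, ih, List.mem_cons, exists_eq_or_imp]

lemma sat_of_tautology (hA : Tautology A) (m : Mo) (h : Set Mo) : M.Sat A m h := by
  classical
  simpa using hA (fun B => decide (M.Sat B m h))
    (fun B C => Bool.eq_iff_iff.2 (by simp only [Bool.and_eq_true, decide_eq_true_iff]; rfl))
    (fun B => Bool.eq_iff_iff.2
      (by simp only [Bool.not_eq_true', decide_eq_true_iff, decide_eq_false_iff_not]; rfl))

lemma sat_stit_of_mem_choice {C : Set (Set Mo)} (hC : C ∈ M.choice m j) (hhC : h ∈ C)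
    (hA : ∀ h' ∈ C, M.Sat A m h') : M.Sat (Form.stit j A) m h :=
  fun h' C' hC' hhC' hh'C' => hA h' (M.choice_disjoint m j C C' hC hC' ⟨h, hhC, hhC'⟩ ▸ hh'C')

lemma exists_mem_choice_of_sat_dia_stit (hs : M.Sat (Form.stit j A).dia m h) :
    ∃ C ∈ M.choice m j, ∀ h' ∈ C, M.Sat A m h' := by
  obtain ⟨h', hh', hA⟩ := sat_dia.1 hs
  obtain ⟨C, hC, hh'C⟩ := M.choice_cover m j h' hh'
  exact ⟨C, hC, fun h'' hh''C => hA h'' C hC hh'C hh''C⟩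

lemma exists_sat_stit_of_sat_dia_stit {p : Ag × Form Ag PVar PConst PropVar}
    {L : List (Ag × Form Ag PVar PConst PropVar)} (hnd : ((p :: L).map Prod.fst).Nodup)
    (hh : h ∈ M.toTemporalFrame.H m) (hdia : ∀ q ∈ p :: L, M.Sat (Form.stit q.1 q.2).dia m h) :
    ∃ h' ∈ M.toTemporalFrame.H m, ∀ q ∈ p :: L, M.Sat (Form.stit q.1 q.2) m h' := by
  classical
  have hcell : ∀ j, ∃ C ∈ M.choice m j, ∀ q ∈ p :: L, q.1 = j → ∀ h' ∈ C, M.Sat q.2 m h' := by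
    intro j
    by_cases hj : ∃ q ∈ p :: L, q.1 = j
    · obtain ⟨q, hq, rfl⟩ := hj
      obtain ⟨C, hC, hCA⟩ := exists_mem_choice_of_sat_dia_stit (hdia q hq)
      exact ⟨C, hC, fun q' hq' hq'q => List.inj_on_of_nodup_map hnd hq' hq hq'q ▸ hCA⟩
    · obtain ⟨C, hC, -⟩ := M.choice_cover m j h hh
      exact ⟨C, hC, fun q hq hqj => absurd ⟨q, hq, hqj⟩ hj⟩
  choose f hf hfA using hcell
  obtain ⟨h', hh'⟩ := M.independence m f hf
  rw [Set.mem_iInter] at hh'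
  exact ⟨h', M.choice_cell_sub m p.1 (f p.1) (hf p.1) (hh' p.1),
    fun q hq => sat_stit_of_mem_choice (hf q.1) (hh' q.1) (hfA q.1 q hq rfl)⟩

lemma valid_of_ax (hA : Ax A) : M.Valid A := by
  induction hA with
  | a0 hA => exact fun m h _ => sat_of_tautology hA m h
  | boxK =>
    exact fun _ _ _ => sat_imp.2 fun hAB => sat_imp.2 fun hA h' hh' =>
      sat_imp.1 (hAB h' hh') (hA h' hh')
  | boxT => exact fun _ h hh => sat_imp.2 fun hA => hA h hh
  | box4 => exact fun _ _ _ => sat_imp.2 fun hA _ _ h' hh' => hA h' hh'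
  | box5 => exact fun _ _ _ => sat_imp.2 fun hA _ _ => hA
  | stitK =>
    exact fun _ _ _ => sat_imp.2 fun hAB => sat_imp.2 fun hA h' C hC hhC hh'C =>
      sat_imp.1 (hAB h' C hC hhC hh'C) (hA h' C hC hhC hh'C)
  | @stitT j _ =>
    intro m h hh
    obtain ⟨C, hC, hhC⟩ := M.choice_cover m j h hh
    exact sat_imp.2 fun hA => hA h C hC hhC hhC
  | stit4 =>
    refine fun m h _ => sat_imp.2 fun hA h' C hC hhC hh'C => ?_
    exact sat_stit_of_mem_choice hC hh'C fun h'' hh''C => hA h'' C hC hhC hh''C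
  | stit5 =>
    refine fun m h _ => sat_imp.2 fun hnA h' C hC hhC hh'C hA => hnA ?_
    exact sat_stit_of_mem_choice hC hhC fun h'' hh''C => hA h'' C hC hh'C hh''C
  | a2 =>
    exact fun m _ _ => sat_imp.2 fun hA h' C hC _ hh'C =>
      hA h' (M.choice_cell_sub m _ C hC hh'C)
  | a3 hnd =>
    refine fun m h hh => sat_imp.2 fun hdia => ?_
    rw [sat_andList, List.forall_mem_map] at hdia
    obtain ⟨h', hh', hstit⟩ :=
      exists_sat_stit_of_sat_dia_stit hnd hh (List.forall_mem_cons.2 hdia)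
    exact sat_dia.2 ⟨h', hh', sat_andList.2 ⟨hstit _ List.mem_cons_self,
      List.forall_mem_map.2 fun q hq => hstit q (List.mem_cons_of_mem _ hq)⟩⟩
  | a4 =>
    exact fun m _ _ => sat_imp.2 fun hst => sat_imp.2 fun hs =>
      ⟨M.ev_app m _ _ _ _ hst.1 hs.1, fun m' h' hre hh' =>
        sat_imp.1 (hst.2 m' h' hre hh') (hs.2 m' h' hre hh')⟩
  | a5 =>
    refine fun m _ _ => sat_imp.2 fun ht => ⟨⟨M.ev_bang m _ _ ht.1, fun m' _ hre _ => ?_⟩,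
      fun m' h' hr hh' => ht.2 m' h' (M.R_sub_Re hr) hh'⟩
    exact ⟨M.ev_mono m m' _ hre ht.1, fun m'' h'' hre' hh'' =>
      ht.2 m'' h'' (M.Re_trans hre hre') hh''⟩
  | a6 =>
    refine fun m _ _ => sat_imp.2 fun hst => ?_
    rcases sat_or.1 hst with hs | ht
    · exact ⟨M.ev_sum_left m _ _ hs.1, hs.2⟩
    · exact ⟨M.ev_sum_right m _ _ ht.1, ht.2⟩
  | knowK =>
    exact fun _ _ _ => sat_imp.2 fun hAB => sat_imp.2 fun hA m' h' hr hh' =>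
      sat_imp.1 (hAB m' h' hr hh') (hA m' h' hr hh')
  | knowT => exact fun m h hh => sat_imp.2 fun hA => hA m h (M.R_refl m) hh
  | know4 =>
    exact fun _ _ _ => sat_imp.2 fun hA _ _ hr _ m'' h'' hr' hh'' =>
      hA m'' h'' (M.R_trans hr hr') hh''
  | a8 => exact fun _ _ _ => sat_imp.2 fun hA _ _ m' _ hr _ h'' hh'' => hA m' h'' hr hh''
  | a9 =>
    exact fun m _ _ => sat_imp.2 fun ht m' _ hr _ h'' hh'' =>
      M.transparent m m' _ (M.R_sub_Re hr) ht h'' hh''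

lemma valid_of_mem_constSpec {CS : Set (Form Ag PVar PConst PropVar)} (hCS : IsConstSpec CS)
    (hN : CSNormal CS M) {B : Form Ag PVar PConst PropVar} (hB : B ∈ CS) : M.Valid B := by
  induction hCS.1 B hB with
  | @base c A hA =>
    exact fun m _ _ => ⟨hN c m _ hB, fun m' h' _ hh' => valid_of_ax hA m' h' hh'⟩
  | @step c B hB' ih =>
    obtain ⟨c', B', rfl⟩ : ∃ c' B', B = Form.proves (Pol.const c') B' := by
      cases hB' <;> exact ⟨_, _, rfl⟩
    exact fun m _ _ => ⟨hN c m _ hB, fun m' h' _ hh' => ih (hCS.2 c c' B' hB) m' h' hh'⟩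

lemma act_mono (hmn : M.le m n) (hh : h ∈ M.toTemporalFrame.H n) : M.act m h ⊆ M.act n h := by
  by_cases hmn' : m = n
  · exact hmn' ▸ subset_rfl
  · exact M.expansion n m h ⟨hmn, hmn'⟩ hh

lemma actM_eq_act_of_forall_act_eq (hh : h ∈ M.toTemporalFrame.H m)
    (hall : ∀ k ∈ M.toTemporalFrame.H m, M.act m k = M.act m h) : M.ActM m = M.act m h :=
  Set.ext fun _ => ⟨fun ht => ht h hh, fun ht k hk => (hall k hk).symm ▸ ht⟩

lemma actM_eq_act_of_next (hnext : M.toTemporalFrame.Next m n) (hh : h ∈ M.toTemporalFrame.H n) :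
    M.ActM n = M.act m h := by
  have hH := H_anti hnext.1.1
  have hact : ∀ k ∈ M.toTemporalFrame.H n, M.act m k = M.act m h := fun k hk =>
    M.divide m k h (hH hk) (hH hh) ⟨n, hnext.1, hk.2, hh.2⟩
  refine Set.ext fun t =>
    ⟨fun ht => ?_, fun ht k hk => act_mono hnext.1.1 hk ((hact k hk).symm ▸ ht)⟩
  obtain ⟨m', k, hm'n, hk, htk⟩ := M.no_new n t ht
  exact hact k hk ▸ act_mono (hnext.2 m' hm'n) (hH hk) htk

lemma exists_le_actM_eq_act (hMS : M.toTemporalFrame.MixSucc)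
    (hh : h ∈ M.toTemporalFrame.H m) :
    ∃ n, M.le m n ∧ h ∈ M.toTemporalFrame.H n ∧ M.ActM n = M.act m h := by
  by_cases hmax : ∃ n, M.toTemporalFrame.lt m n
  · obtain ⟨n, hmn⟩ := hmax
    obtain ⟨p, hph, hmp⟩ := exists_lt_mem_of_lt hmn hh
    rcases hMS m p with hnext | hundiv
    · obtain ⟨n, hnp, hnext⟩ := hnext hmp
      have hhn : h ∈ M.toTemporalFrame.H n := ⟨hh.1, hh.1.mem_of_le hnp hph⟩
      exact ⟨n, hnext.1.1, hhn, actM_eq_act_of_next hnext hhn⟩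
    · exact ⟨m, M.le_refl m, hh, actM_eq_act_of_forall_act_eq hh fun k hk =>
        M.divide m k h hk hh (hundiv k hk h hh)⟩
  · push Not at hmax
    exact ⟨m, M.le_refl m, hh, actM_eq_act_of_forall_act_eq hh fun k hk =>
      subsingleton_H_of_forall_not_lt hmax hk hh ▸ rfl⟩

variable [Inhabited PropVar] {ts ss : List (Pol PVar PConst)}

lemma valid_rd (hMS : M.toTemporalFrame.MixSucc)
    (hprem : M.Valid (Form.imp (Form.know A)
      (bigOr ((ts.map fun t => Form.neg (Form.box (Form.ann t))) ++
              (ss.map fun s => Form.box (Form.ann s)))))) :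
    M.Valid (Form.imp (Form.know A)
      (bigOr ((ts.map fun t => Form.neg (Form.ann t)) ++ (ss.map fun s => Form.ann s)))) := by
  refine fun m h hh => sat_imp.2 fun hKA => sat_bigOr.2 ?_
  obtain ⟨n, hmn, hhn, hact⟩ := exists_le_actM_eq_act hMS hh
  have hKAn : M.Sat (Form.know A) n h := fun n' k hr hk =>
    hKA n' k (M.R_trans (M.le_sub_R hmn) hr) hk
  obtain ⟨B, hB, hBn⟩ := sat_bigOr.1 (sat_imp.1 (hprem n h hhn) hKAn)
  simp only [List.mem_append, List.mem_map] at hB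
  rcases hB with ⟨t, ht, rfl⟩ | ⟨s, hs, rfl⟩
  · refine ⟨_, List.mem_append_left _ (List.mem_map_of_mem ht), ?_⟩
    show t ∉ M.act m h
    exact hact ▸ hBn
  · refine ⟨_, List.mem_append_right _ (List.mem_map_of_mem hs), ?_⟩
    show s ∈ M.act m h
    exact hact ▸ hBn

theorem valid_of_proves {CS : Set (Form Ag PVar PConst PropVar)} (hCS : IsConstSpec CS)
    (hMS : M.toTemporalFrame.MixSucc) (hN : CSNormal CS M) (hA : Proves CS A) : M.Valid A := by
  induction hA with
  | ax hA => exact valid_of_ax hA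
  | mp _ _ ihAB ihA => exact fun m h hh => sat_imp.1 (ihAB m h hh) (ihA m h hh)
  | nec _ ih => exact fun _ _ _ m' h' _ hh' => ih m' h' hh'
  | rd _ _ ih => exact valid_rd hMS ih
  | rcs hB => exact valid_of_mem_constSpec hCS hN hB

end JstitModel

section Derivations

variable {Ag PVar PConst PropVar : Type} [Inhabited PropVar]
  {CS : Set (Form Ag PVar PConst PropVar)} {A B C : Form Ag PVar PConst PropVar}

lemma Proves.trans (hAB : Proves CS (A.imp B)) (hBC : Proves CS (B.imp C)) :
    Proves CS (A.imp C) := by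
  refine Proves.mp (Proves.mp (Proves.ax (Ax.a0 fun v hand hneg => ?_)) hAB) hBC
  simp only [Form.imp, hand, hneg]
  cases v A <;> cases v B <;> cases v C <;> rfl

lemma Proves.box (hA : Proves CS A) : Proves CS A.box :=
  Proves.mp (Proves.ax Ax.knowT) (Proves.mp (Proves.ax Ax.boxT)
    (Proves.mp (Proves.ax Ax.a8) (Proves.nec hA)))

lemma proves_know_imp_box : Proves CS (A.know.imp A.box) :=
  (Proves.ax Ax.a8).trans
    ((Proves.mp (Proves.ax Ax.boxK) (Proves.ax Ax.knowT).box).trans (Proves.ax Ax.boxT))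

lemma Proves.imp_neg_or_of_imp_imp {P Q' R' : Form Ag PVar PConst PropVar}
    (hP : Proves CS (P.imp (Q'.imp R'))) (hQ : Proves CS (A.imp Q'))
    (hR : Proves CS (R'.imp B)) :
    Proves CS (P.imp (A.neg.or B)) := by
  refine Proves.mp (Proves.mp (Proves.mp (Proves.ax (Ax.a0 fun v hand hneg => ?_)) hP) hQ) hR
  simp only [Form.imp, Form.or, hand, hneg]
  cases v P <;> cases v A <;> cases v Q' <;> cases v R' <;> cases v B <;> rfl

lemma proves_know_box_imp_box :
    Proves CS ((A.box.imp B.box).know.imp (A.box.neg.or B.box)) :=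
  Proves.imp_neg_or_of_imp_imp (proves_know_imp_box.trans (Proves.ax Ax.boxK))
    (Proves.ax Ax.box4) (Proves.ax Ax.boxT)

def mixSuccFormula (t s : Pol PVar PConst) : Form Ag PVar PConst PropVar :=
  Form.imp (Form.know ((Form.ann t).box.imp (Form.ann s).box))
    ((Form.neg (Form.ann t)).or (Form.ann s))

lemma proves_mixSuccFormula (t s : Pol PVar PConst) : Proves CS (mixSuccFormula t s) :=
  Proves.rd (ts := [t]) (ss := [s]) (by simp) proves_know_box_imp_box

end Derivations

section CounterAct

open TemporalFrame

variable {Mo PVar PConst : Type}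

def counterAct (T : TemporalFrame Mo) (m : Mo) (D : Set (Set Mo)) (t s : Pol PVar PConst)
    (n : Mo) (k : Set Mo) : Set (Pol PVar PConst) :=
  {u | k ∈ D ∧ (u = t ∧ T.le m n ∨ u = s ∧ T.lt m n)}

variable {T : TemporalFrame Mo} {m n n' : Mo} {D : Set (Set Mo)} {t s u : Pol PVar PConst}
  {k k' : Set Mo}

lemma le_of_mem_counterAct (hu : u ∈ counterAct T m D t s n k) : T.le m n :=
  hu.2.elim (·.2) (·.2.1)

lemma counterAct_mono (hnn' : T.le n n') :
    counterAct T m D t s n k ⊆ counterAct T m D t s n' k :=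
  fun _ ⟨hkD, hu⟩ => ⟨hkD, hu.imp (.imp_right (T.le_trans · hnn'))
    (.imp_right (lt_of_lt_of_le · hnn'))⟩

lemma counterAct_eq_of_undiv
    (hD : ∀ n k k', T.le m n → k ∈ T.H n → k' ∈ T.H n → T.Undiv n k k' → k ∈ D → k' ∈ D)
    (hk : k ∈ T.H n) (hk' : k' ∈ T.H n) (hu : T.Undiv n k k') :
    counterAct T m D t s n k = counterAct T m D t s n k' :=
  Set.ext fun _ =>
    ⟨fun hmem => ⟨hD n k k' (le_of_mem_counterAct hmem) hk hk' hu hmem.1, hmem.2⟩,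
      fun hmem => ⟨hD n k' k (le_of_mem_counterAct hmem) hk' hk hu.symm hmem.1, hmem.2⟩⟩

lemma exists_lt_mem_counterAct (hgap : ∃ g ∈ T.H m, g ∉ D)
    (hdense : ∀ n k, T.lt m n → k ∈ T.H n → k ∈ D → ∃ p, T.lt m p ∧ T.lt p n)
    (hall : ∀ k ∈ T.H n, u ∈ counterAct T m D t s n k) :
    ∃ n' k, T.lt n' n ∧ k ∈ T.H n ∧ u ∈ counterAct T m D t s n' k := by
  obtain ⟨k, hk⟩ := exists_mem_H (T := T) n
  obtain ⟨hkD, ⟨rfl, hmn⟩ | ⟨rfl, hmn⟩⟩ := hall k hk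
  · obtain ⟨g, hg, hgD⟩ := hgap
    have hne : m ≠ n := by rintro rfl; exact hgD (hall g hg).1
    exact ⟨m, k, ⟨hmn, hne⟩, hk, hkD, .inl ⟨rfl, T.le_refl m⟩⟩
  · obtain ⟨p, hmp, hpn⟩ := hdense n k hmn hk hkD
    exact ⟨p, k, hpn, hk, hkD, .inr ⟨rfl, hmp⟩⟩

end CounterAct

section Countermodel

open TemporalFrame JstitModel

variable {Mo Ag PVar PConst PropVar : Type} {C : StitFrame Mo Ag} {m : Mo}
  {D : Set (Set Mo)} {t s : Pol PVar PConst}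

def counterModel (C : StitFrame Mo Ag) (m : Mo) (D : Set (Set Mo)) (t s : Pol PVar PConst)
    (hD : ∀ n k k', C.le m n → k ∈ C.H n → k' ∈ C.H n → C.Undiv n k k' → k ∈ D → k' ∈ D)
    (hgap : ∃ g ∈ C.H m, g ∉ D)
    (hdense : ∀ n k, C.lt m n → k ∈ C.H n → k ∈ D → ∃ p, C.lt m p ∧ C.lt p n) :
    JstitModel Mo Ag PVar PConst PropVar where
  toStitFrame := C
  R := C.le
  Re := C.le
  R_refl := C.le_refl
  R_trans := C.le_trans
  Re_refl := C.le_refl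
  Re_trans := C.le_trans
  R_sub_Re := id
  le_sub_R := id
  act := counterAct C.toTemporalFrame m D t s
  ev _ _ := Set.univ
  val _ := ∅
  ev_mono _ _ _ _ := subset_rfl
  ev_app _ _ _ _ _ _ _ := Set.mem_univ _
  ev_sum_left _ _ _ := Set.subset_univ _
  ev_sum_right _ _ _ := Set.subset_univ _
  ev_bang _ _ _ _ := Set.mem_univ _
  expansion _ _ _ hlt _ := counterAct_mono hlt.1
  no_new _ _ := exists_lt_mem_counterAct hgap hdense
  divide _ _ _ hk hk' hu := counterAct_eq_of_undiv hD hk hk' hu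
  transparent _ _ _ hnn' hall k hk := counterAct_mono hnn' (hall k (H_anti hnn' hk))

lemma counterModel_not_valid {hD hgap hdense} (hts : t ≠ s) {h : Set Mo} (hh : h ∈ C.H m)
    (hhD : h ∈ D) :
    ¬ (counterModel (PropVar := PropVar) C m D t s hD hgap hdense).Valid (mixSuccFormula t s) := by
  intro hvalid
  refine (sat_or.1 (sat_imp.1 (hvalid m h hh) fun n k hmn _ =>
    sat_imp.2 fun hbox k' hk' => ?_)).elim (fun hnt => hnt ⟨hhD, .inl ⟨rfl, C.le_refl m⟩⟩) ?_
  · obtain ⟨g, hg, hgD⟩ := hgap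
    have hne : m ≠ n := by rintro rfl; exact hgD (hbox g hg).1
    exact ⟨(hbox k' hk').1, .inr ⟨rfl, hmn, hne⟩⟩
  · rintro ⟨-, ⟨hst, -⟩ | ⟨-, hmm⟩⟩
    · exact hts hst.symm
    · exact hmm.2 rfl

theorem exists_not_valid_of_not_mixSucc (hC : ¬ C.MixSucc) (hts : t ≠ s) :
    ∃ M : JstitModel Mo Ag PVar PConst PropVar, M.toStitFrame = C ∧
      (∀ CS, CSNormal CS M) ∧ ¬ M.Valid (mixSuccFormula t s) := by
  simp only [TemporalFrame.MixSucc] at hC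
  push Not at hC
  obtain ⟨m, m1, ⟨hm1, hnext⟩, hdiv⟩ := hC
  obtain ⟨h1, hh1⟩ := exists_mem_H (T := C.toTemporalFrame) m1
  refine ⟨counterModel C m {k | C.Undiv m h1 k} t s ?_ ?_ ?_, rfl,
    fun _ _ _ _ _ => Set.mem_univ _,
    counterModel_not_valid hts (H_anti hm1.1 hh1) ⟨m1, hm1, hh1.2, hh1.2⟩⟩
  · exact fun n k k' hmn hkH hk'H hu hk => hk.trans (hu.mono hmn) hh1.1 hkH.1 hk'H.1
  · exact exists_not_undiv hdiv hh1.1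
  · exact fun n k hmn hk hkD => exists_between_of_undiv hm1 hnext hh1 hmn hk hkD

end Countermodel

theorem stmt10_general {Mo Ag PVar PConst PropVar : Type} [Infinite PVar] [Inhabited PropVar]
    (C : StitFrame Mo Ag)
    (CS : Set (Form Ag PVar PConst PropVar)) (hCS : IsConstSpec CS) :
    (∀ M : JstitModel Mo Ag PVar PConst PropVar,
        M.toJstitFrame.toStitFrame = C → CSNormal CS M →
        ∀ A : Form Ag PVar PConst PropVar, Proves CS A → M.Valid A) ↔
      C.toTemporalFrame.MixSucc := by
  refine ⟨fun hvalid => ?_, fun hMS M hMC hN A hA => ?_⟩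
  · by_contra hMS
    obtain ⟨x, y, hxy⟩ := exists_pair_ne PVar
    obtain ⟨M, rfl, hN, hM⟩ := exists_not_valid_of_not_mixSucc (PConst := PConst)
      (PropVar := PropVar) hMS (mt Pol.var.inj hxy)
    exact hM (hvalid M rfl (hN CS) _ (proves_mixSuccFormula _ _))
  · subst hMC
    exact JstitModel.valid_of_proves hCS hMS hN hA

/-- Theorem 3: every CS-normal jstit model based on a stit frame `C`
validates all theorems of Σ_D(CS) iff `C` is a mixed successor frame. -/
theorem stmt10 {Mo Ag PVar PConst PropVar : Type} [Finite Ag]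
    [Countable PVar] [Infinite PVar] [Countable PConst] [Infinite PConst]
    [Countable PropVar] [Infinite PropVar] [Inhabited PropVar]
    (C : StitFrame Mo Ag)
    (CS : Set (Form Ag PVar PConst PropVar)) (hCS : IsConstSpec CS) :
    (∀ M : JstitModel Mo Ag PVar PConst PropVar,
        M.toJstitFrame.toStitFrame = C → CSNormal CS M →
        ∀ A : Form Ag PVar PConst PropVar, Proves CS A → M.Valid A) ↔
      C.toTemporalFrame.MixSucc :=
  stmt10_general C CS hCS
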